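/- Let λ ≥ 1, let ψ be an even C^∞ function on R supported in {1/2 < |s| < 2}, and let L_λ = ψ(λ^{-1}D) be the corresponding Fourier multiplier operator on T. Let D_k = E_k - E_{k-1} for k ≥ 1 be the martingale difference operators with respect to the dyadic filtration. Then there is a constant C (depending only on ψ) such that for all k ≥ 1, ‖D_k L_λ f‖_∞ ≤ C min{2^k/λ, λ 2^{-k}} ‖f‖_∞ for all f ∈ L^∞(T). -/

import Mathlib

open MeasureTheory Real Set ENNReal
noncomputable section

/-- Lebesgue measure on a fundamental domain of the torus T = R/Z. -/
def muT : Measure ℝ := volume.restrict (Set.Ico (0:ℝ) 1)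

/-- L^infty norm on the torus. -/
def LinfN (f : ℝ → ℂ) : ℝ≥0∞ := eLpNorm f ⊤ muT

/-- L^p norm on the torus, real exponent p. -/
def LpN (p : ℝ) (f : ℝ → ℂ) : ℝ≥0∞ := eLpNorm f (ENNReal.ofReal p) muT

/-- The exp L^ν norm: sup over 1 ≤ p < ∞ of p^{-1/ν} ‖f‖_p. -/
def expLN (ν : ℝ) (f : ℝ → ℂ) : ℝ≥0∞ :=
  ⨆ p ∈ Set.Ici (1:ℝ), ENNReal.ofReal (p ^ (-1/ν)) * LpN p f

/-- Dyadic conditional expectation: average over the dyadic interval of length 2^{-k}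
containing x. -/
def EkOp (k : ℕ) (f : ℝ → ℂ) : ℝ → ℂ := fun x =>
  ((2:ℂ)^k) * ∫ t in ((⌊(2:ℝ)^k * x⌋ : ℝ)/(2:ℝ)^k)..(((⌊(2:ℝ)^k * x⌋ : ℝ) + 1)/(2:ℝ)^k), f t

/-- Martingale difference operators: D_0 = E_0, D_k = E_k - E_{k-1}. -/
def DkOp : ℕ → (ℝ → ℂ) → (ℝ → ℂ)
  | 0 => EkOp 0
  | (k+1) => fun f x => EkOp (k+1) f x - EkOp k f x

/-- Fourier coefficient of a 1-periodic function. -/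
def fCoeff (f : ℝ → ℂ) (n : ℤ) : ℂ :=
  ∫ t in (0:ℝ)..1, f t * Complex.exp (-2 * Real.pi * Complex.I * n * t)

/-- Fourier multiplier operator with multiplier sequence m. -/
def multOp (m : ℤ → ℂ) (f : ℝ → ℂ) : ℝ → ℂ := fun x =>
  ∑' n : ℤ, m n * fCoeff f n * Complex.exp (2 * Real.pi * Complex.I * n * x)

/-- The Littlewood–Paley pieces built from the bump Φ. -/
def phiLP (Φ : ℝ → ℝ) : ℕ → ℝ → ℝ
  | 0 => Φ
  | (k+1) => fun s => Φ (s / 2^(k+1)) - Φ (s / 2^k)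

/-- Littlewood–Paley projection L_k. -/
def LPOp (Φ : ℝ → ℝ) (k : ℕ) (f : ℝ → ℂ) : ℝ → ℂ :=
  multOp (fun n => ((phiLP Φ k n : ℝ) : ℂ)) f

/-- Besov norm of B^∞_{0,q}. -/
def besovN (Φ : ℝ → ℝ) (q : ℝ) (f : ℝ → ℂ) : ℝ≥0∞ :=
  (∑' k : ℕ, (LinfN (LPOp Φ k f)) ^ q) ^ (1/q)

/-- Dyadic Besov norm of ℓ^q(B^∞_dyad). -/
def dyadN (q : ℝ) (f : ℝ → ℂ) : ℝ≥0∞ :=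
  (∑' k : ℕ, (LinfN (DkOp k f)) ^ q) ^ (1/q)

/-- Conditions on the generating bump Φ for the Littlewood–Paley decomposition. -/
def GoodPhi (Φ : ℝ → ℝ) : Prop :=
  ContDiff ℝ (⊤ : ℕ∞) Φ ∧ (∀ s, Φ (-s) = Φ s) ∧ (∀ s : ℝ, |s| ≤ 1 → Φ s = 1) ∧
    Function.support Φ ⊆ Set.Ioo (-2) 2


def cE (n : ℤ) (y : ℝ) : ℂ := Complex.exp (2 * Real.pi * Complex.I * n * y)

lemma cE_norm (n : ℤ) (y : ℝ) : ‖cE n y‖ = 1 := by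
  unfold cE
  rw [Complex.norm_exp]
  have : (2 * (Real.pi:ℂ) * Complex.I * n * y).re = 0 := by
    simp [Complex.mul_re, Complex.mul_im]
  rw [this, Real.exp_zero]

lemma cE_periodic (n : ℤ) : Function.Periodic (cE n) 1 := by
  intro y
  unfold cE
  push_cast
  rw [mul_add, Complex.exp_add, mul_one]
  have : Complex.exp (2 * Real.pi * Complex.I * n) = 1 := by
    rw [show (2 * (Real.pi:ℂ) * Complex.I * n) = n * (2 * Real.pi * Complex.I) by ring,
      Complex.exp_int_mul_two_pi_mul_I]
  rw [this, mul_one]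

lemma cE_zpow (n : ℤ) (y : ℝ) : cE n y = (cE 1 y) ^ n := by
  unfold cE
  rw [show (2 * (Real.pi:ℂ) * Complex.I * n * y) = n * (2 * Real.pi * Complex.I * ((1:ℤ):ℂ) * y) by
    push_cast; ring, Complex.exp_int_mul]

lemma cE_ne_zero (n : ℤ) (y : ℝ) : cE n y ≠ 0 := Complex.exp_ne_zero _

lemma continuous_cE (n : ℤ) : Continuous (cE n) := by
  unfold cE
  fun_prop

lemma hasDerivAt_cE (n : ℤ) (y : ℝ) :
    HasDerivAt (cE n) (2 * Real.pi * Complex.I * n * cE n y) y := by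
  have h0 : HasDerivAt (fun x : ℝ => (x : ℂ)) 1 y := by
    simpa [RCLike.ofRealCLM_apply] using (RCLike.ofRealCLM (K := ℂ)).hasDerivAt (x := y)
  have h2 := (h0.const_mul (2 * (Real.pi:ℂ) * Complex.I * n)).cexp
  unfold cE
  simpa [mul_comm] using h2

lemma cE_mul_exp_neg (n : ℤ) (y t : ℝ) :
    cE n y * Complex.exp (-2 * Real.pi * Complex.I * n * t) = cE n (y - t) := by
  unfold cE
  rw [← Complex.exp_add]
  push_cast
  ring_nf

lemma integral_cE {n : ℤ} (hn : n ≠ 0) (a b : ℝ) :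
    ∫ t in a..b, cE n t = (cE n b - cE n a) / (2 * Real.pi * Complex.I * n) := by
  have hc : (2 * (Real.pi:ℂ) * Complex.I * n) ≠ 0 := by
    simp [Real.pi_ne_zero, Complex.I_ne_zero, hn]
  exact integral_exp_mul_complex hc

/-- Mean value theorem bound. -/
lemma mvt_bound {E : Type*} [NormedAddCommGroup E] [NormedSpace ℝ E] {g : ℝ → E} {g' : ℝ → E}
    {B : ℝ} (hg : ∀ y, HasDerivAt g (g' y) y) (hB : ∀ y, ‖g' y‖ ≤ B) (a b : ℝ) :
    ‖g b - g a‖ ≤ B * |b - a| := by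
  have := Convex.norm_image_sub_le_of_norm_hasDerivWithin_le (𝕜 := ℝ) (s := Set.univ)
    (f := g) (f' := g') (C := B) (fun x _ => (hg x).hasDerivWithinAt)
    (fun x _ => hB x) convex_univ (Set.mem_univ a) (Set.mem_univ b)
  simpa [Real.norm_eq_abs] using this

lemma second_diff_bound {E : Type*} [NormedAddCommGroup E] [NormedSpace ℝ E]
    {g g' g'' : ℝ → E} {B : ℝ}
    (hg : ∀ y, HasDerivAt g (g' y) y) (hg' : ∀ y, HasDerivAt g' (g'' y) y)
    (hB : ∀ y, ‖g'' y‖ ≤ B) (b h : ℝ) (hh : 0 ≤ h) :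
    ‖(g (b + 2*h) - g (b + h)) - (g (b + h) - g b)‖ ≤ B * h^2 := by
  set d : ℝ → E := fun y => g (y + h) - g y with hd
  have hdD : ∀ y, HasDerivAt d (g' (y + h) - g' y) y := by
    intro y
    exact (HasDerivAt.comp_add_const y h (hg (y + h))).sub (hg y)
  have hdB : ∀ y, ‖g' (y + h) - g' y‖ ≤ B * h := by
    intro y
    have := mvt_bound hg' hB y (y + h)
    simpa [abs_of_nonneg hh] using this
  have key : ‖d (b + h) - d b‖ ≤ (B * h) * |(b + h) - b| := mvt_bound hdD hdB b (b + h)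
  have h2 : ‖d (b + h) - d b‖ ≤ (B * h) * h := by
    simpa [abs_of_nonneg hh] using key
  calc ‖(g (b + 2*h) - g (b + h)) - (g (b + h) - g b)‖
      = ‖d (b + h) - d b‖ := by
        rw [hd]
        congr 2 <;> ring_nf
    _ ≤ (B * h) * h := h2
    _ = B * h^2 := by ring

lemma sum_ext_zero {g : ℤ → ℂ} {s t : Finset ℤ} (hst : s ⊆ t)
    (h : ∀ n ∈ t, n ∉ s → g n = 0) : ∑ n ∈ t, g n = ∑ n ∈ s, g n :=
  (Finset.sum_subset hst h).symm

lemma shift_sum (N : ℤ) (hN : 1 ≤ N) (b : ℤ → ℂ) 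
    (hb : ∀ n : ℤ, (n < -(N-2) ∨ N-2 < n) → b n = 0) (z : ℂ) (hz : z ≠ 0) (j : ℤ)
    (hj : 0 ≤ j) (hj2 : j ≤ 2) :
    ∑ n ∈ Finset.Icc (-N) N, b (n - j) * z ^ n
      = z ^ j * ∑ n ∈ Finset.Icc (-N) N, b n * z ^ n := by
  rw [Finset.mul_sum]
  have step : ∀ n : ℤ, z ^ j * (b n * z ^ n) = b n * z ^ (n + j) := by
    intro n
    rw [zpow_add₀ hz]
    ring
  rw [Finset.sum_congr rfl fun n _ => step n]
  have hmap : ∑ n ∈ Finset.Icc (-N) N, b n * z ^ (n + j)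
      = ∑ m ∈ Finset.Icc (-N + j) (N + j), b (m - j) * z ^ m := by
    rw [← Finset.map_add_right_Icc, Finset.sum_map]
    simp [addRightEmbedding]
  rw [hmap]
  -- both sides equal the sum over Icc (-N) (N + j)
  have h1 : ∑ m ∈ Finset.Icc (-N) (N + j), b (m - j) * z ^ m
      = ∑ m ∈ Finset.Icc (-N + j) (N + j), b (m - j) * z ^ m := by
    apply sum_ext_zero (Finset.Icc_subset_Icc (by omega) le_rfl)
    intro n hn hn'
    simp only [Finset.mem_Icc] at hn hn'
    rw [hb (n - j) (by omega), zero_mul]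
  have h2 : ∑ m ∈ Finset.Icc (-N) (N + j), b (m - j) * z ^ m
      = ∑ m ∈ Finset.Icc (-N) N, b (m - j) * z ^ m := by
    apply sum_ext_zero (Finset.Icc_subset_Icc le_rfl (by omega))
    intro n hn hn'
    simp only [Finset.mem_Icc] at hn hn'
    rw [hb (n - j) (by omega), zero_mul]
  rw [← h1, h2]

lemma sbp_identity (N : ℤ) (hN : 1 ≤ N) (b : ℤ → ℂ)
    (hb : ∀ n : ℤ, (n < -(N-2) ∨ N-2 < n) → b n = 0) (z : ℂ) (hz : z ≠ 0) :
    ∑ n ∈ Finset.Icc (-N) N, (b n - 2 * b (n-1) + b (n-2)) * z ^ n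
      = (1 - z)^2 * ∑ n ∈ Finset.Icc (-N) N, b n * z ^ n := by
  have expand : ∀ n : ℤ, (b n - 2 * b (n-1) + b (n-2)) * z ^ n
      = b n * z ^ n - 2 * (b (n-1) * z ^ n) + b (n-2) * z ^ n := by intro n; ring
  rw [Finset.sum_congr rfl fun n _ => expand n]
  rw [Finset.sum_add_distrib, Finset.sum_sub_distrib, ← Finset.mul_sum]
  rw [shift_sum N hN b hb z hz 1 (by norm_num) (by norm_num),
      shift_sum N hN b hb z hz 2 (by norm_num) (by norm_num)]
  have hz1 : z ^ (1:ℤ) = z := zpow_one z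
  have hz2 : z ^ (2:ℤ) = z * z := by
    rw [show (2:ℤ) = 1 + 1 from rfl, zpow_add₀ hz, zpow_one]
  rw [hz1, hz2]
  ring

lemma one_sub_cE_sq {u : ℝ} (h : |u| ≤ 1/2) : 16 * u^2 ≤ ‖1 - cE 1 u‖^2 := by
  have harg : cE 1 u = Complex.exp ((2 * Real.pi * u : ℝ) * Complex.I) := by
    unfold cE
    congr 1
    push_cast
    ring
  rw [harg, Complex.exp_mul_I, ← Complex.ofReal_cos, ← Complex.ofReal_sin]
  have hnorm : ‖1 - ((Real.cos (2*Real.pi*u) : ℂ) + (Real.sin (2*Real.pi*u) : ℂ) * Complex.I)‖^2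
      = (1 - Real.cos (2*Real.pi*u))^2 + (Real.sin (2*Real.pi*u))^2 := by
    rw [Complex.sq_norm, Complex.normSq_apply]
    simp only [Complex.sub_re, Complex.sub_im, Complex.add_re, Complex.add_im, Complex.one_re,
      Complex.one_im, Complex.ofReal_re, Complex.ofReal_im, Complex.mul_re, Complex.mul_im,
      Complex.I_re, Complex.I_im]
    ring
  rw [hnorm]
  have hcos : Real.cos (2*Real.pi*u) ≤ 1 - 2 / Real.pi ^ 2 * (2*Real.pi*u) ^ 2 := by
    apply Real.cos_le_one_sub_mul_cos_sq
    rw [abs_mul, abs_of_nonneg (by positivity : (0:ℝ) ≤ 2 * Real.pi)]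
    calc 2 * Real.pi * |u| ≤ 2 * Real.pi * (1/2) := by
          apply mul_le_mul_of_nonneg_left h (by positivity)
      _ = Real.pi := by ring
  have hsc := Real.sin_sq_add_cos_sq (2*Real.pi*u)
  have hpi : (0:ℝ) < Real.pi ^ 2 := by positivity
  have key : 2 / Real.pi ^ 2 * (2*Real.pi*u) ^ 2 = 8 * u^2 := by
    field_simp
    ring
  nlinarith [sq_nonneg (1 - Real.cos (2*Real.pi*u)), Real.neg_one_le_cos (2*Real.pi*u)]

lemma card_Icc_real (N : ℤ) (hN : 1 ≤ N) :
    (((Finset.Icc (-N) N).card : ℤ) : ℝ) = 2*(N:ℝ)+1 := by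
  rw [Int.card_Icc]
  rw [Int.toNat_of_nonneg (by omega)]
  push_cast
  ring

lemma kernel_L1_bound (N : ℤ) (hN : 1 ≤ N) (b : ℤ → ℂ)
    (hb : ∀ n : ℤ, (n < -(N-2) ∨ N-2 < n) → b n = 0)
    {B0 B2 : ℝ} (h0 : ∀ n, ‖b n‖ ≤ B0) (h2 : ∀ n, ‖b n - 2*b (n-1) + b (n-2)‖ ≤ B2)
    {r : ℝ} (hr : 0 < r) (hr2 : r ≤ 1/2) :
    ∫ u in (-(1/2):ℝ)..(1/2), ‖∑ n ∈ Finset.Icc (-N) N, b n * cE n u‖ ≤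
      2*r*(2*(N:ℝ)+1)*B0 + (2*(N:ℝ)+1)*B2/(2*r) := by
  have hB0 : 0 ≤ B0 := le_trans (norm_nonneg _) (h0 0)
  have hB2 : 0 ≤ B2 := le_trans (norm_nonneg _) (h2 0)
  set K : ℝ → ℂ := fun u => ∑ n ∈ Finset.Icc (-N) N, b n * cE n u with hK
  have hKc : Continuous fun u => ‖K u‖ := by
    apply Continuous.norm
    exact continuous_finset_sum _ fun n _ => continuous_const.mul (continuous_cE n)
  have hcardN : (((Finset.Icc (-N) N).card : ℤ) : ℝ) = 2*(N:ℝ)+1 := card_Icc_real N hN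
  have hNpos : (0:ℝ) ≤ 2*(N:ℝ)+1 := by
    have : (1:ℝ) ≤ (N:ℝ) := by exact_mod_cast hN
    linarith
  have P0 : ∀ u : ℝ, ‖K u‖ ≤ (2*(N:ℝ)+1) * B0 := by
    intro u
    calc ‖K u‖ ≤ ∑ n ∈ Finset.Icc (-N) N, ‖b n * cE n u‖ := norm_sum_le _ _
      _ ≤ ∑ _n ∈ Finset.Icc (-N) N, B0 := by
          apply Finset.sum_le_sum
          intro n _
          rw [norm_mul, cE_norm, mul_one]
          exact h0 n
      _ = (2*(N:ℝ)+1) * B0 := by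
          rw [Finset.sum_const, nsmul_eq_mul]
          have hc : ((Finset.Icc (-N) N).card : ℝ) = 2*(N:ℝ)+1 := by exact_mod_cast hcardN
          rw [hc]
  have P2 : ∀ u : ℝ, u ≠ 0 → |u| ≤ 1/2 →
      ‖K u‖ ≤ (2*(N:ℝ)+1) * B2 / 16 * (u^2)⁻¹ := by
    intro u hu0 huh
    have hu2 : (0:ℝ) < u^2 := by positivity
    set z : ℂ := cE 1 u with hzdef
    have hz : z ≠ 0 := cE_ne_zero 1 u
    have hKz : K u = ∑ n ∈ Finset.Icc (-N) N, b n * z ^ n := by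
      rw [hK]
      exact Finset.sum_congr rfl fun n _ => by rw [cE_zpow n u]
    have hid : ∑ n ∈ Finset.Icc (-N) N, (b n - 2 * b (n-1) + b (n-2)) * z ^ n
        = (1 - z)^2 * K u := by rw [hKz]; exact sbp_identity N hN b hb z hz
    have hbound : ‖(1 - z)^2 * K u‖ ≤ (2*(N:ℝ)+1) * B2 := by
      rw [← hid]
      calc ‖∑ n ∈ Finset.Icc (-N) N, (b n - 2 * b (n-1) + b (n-2)) * z ^ n‖
          ≤ ∑ n ∈ Finset.Icc (-N) N, ‖(b n - 2 * b (n-1) + b (n-2)) * z ^ n‖ := norm_sum_le _ _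
        _ ≤ ∑ _n ∈ Finset.Icc (-N) N, B2 := by
            apply Finset.sum_le_sum
            intro n _
            rw [norm_mul, ← cE_zpow, cE_norm, mul_one]
            exact h2 n
        _ = (2*(N:ℝ)+1) * B2 := by
            rw [Finset.sum_const, nsmul_eq_mul]
            have hc : ((Finset.Icc (-N) N).card : ℝ) = 2*(N:ℝ)+1 := by exact_mod_cast hcardN
            rw [hc]
    have hlow : 16 * u^2 ≤ ‖1 - z‖^2 := one_sub_cE_sq huh
    have hmain : 16 * u^2 * ‖K u‖ ≤ (2*(N:ℝ)+1) * B2 := by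
      calc 16 * u^2 * ‖K u‖ ≤ ‖1 - z‖^2 * ‖K u‖ := by
            apply mul_le_mul_of_nonneg_right hlow (norm_nonneg _)
        _ = ‖(1 - z)^2 * K u‖ := by rw [norm_mul, norm_pow]
        _ ≤ (2*(N:ℝ)+1) * B2 := hbound
    rw [show (2*(N:ℝ)+1) * B2 / 16 * (u^2)⁻¹ = ((2*(N:ℝ)+1) * B2) / (16 * u^2) by ring,
      le_div_iff₀ (by positivity)]
    linarith [hmain]
  have hint : ∀ a b : ℝ, IntervalIntegrable (fun u => ‖K u‖) volume a b :=
    fun a b => hKc.intervalIntegrable a b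
  -- split
  have hr' : -(1/2:ℝ) ≤ -r := by linarith
  have hsplit : ∫ u in (-(1/2):ℝ)..(1/2), ‖K u‖
      = (∫ u in (-(1/2):ℝ)..(-r), ‖K u‖) + (∫ u in (-r:ℝ)..r, ‖K u‖)
        + ∫ u in (r:ℝ)..(1/2), ‖K u‖ := by
    rw [intervalIntegral.integral_add_adjacent_intervals (hint _ _) (hint _ _),
      intervalIntegral.integral_add_adjacent_intervals (hint _ _) (hint _ _)]
  -- middle
  have hmid : (∫ u in (-r:ℝ)..r, ‖K u‖) ≤ 2*r*((2*(N:ℝ)+1) * B0) := by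
    calc (∫ u in (-r:ℝ)..r, ‖K u‖) ≤ ∫ _u in (-r:ℝ)..r, (2*(N:ℝ)+1) * B0 := by
          apply intervalIntegral.integral_mono_on (by linarith) (hint _ _)
            intervalIntegrable_const
          intro x _
          exact P0 x
      _ = 2*r*((2*(N:ℝ)+1) * B0) := by
          rw [intervalIntegral.integral_const, smul_eq_mul]
          ring
  -- inverse-square integrals
  have hinvint : ∀ a b : ℝ, a ≤ b → (0 < a ∨ b < 0) →
      ∫ u in a..b, (u^2)⁻¹ = (-b⁻¹) - (-a⁻¹) := by
    intro a b hab hne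
    have hx0 : ∀ x ∈ Set.uIcc a b, x ≠ 0 := by
      intro x hx
      rw [Set.uIcc_of_le hab] at hx
      rcases hne with h | h
      · exact ne_of_gt (lt_of_lt_of_le h hx.1)
      · exact ne_of_lt (lt_of_le_of_lt hx.2 h)
    apply intervalIntegral.integral_eq_sub_of_hasDerivAt
    · intro x hx
      simpa using (hasDerivAt_inv (hx0 x hx)).fun_neg
    · apply ContinuousOn.intervalIntegrable
      exact ContinuousOn.inv₀ (by fun_prop) fun x hx => pow_ne_zero 2 (hx0 x hx)
  have htail : ∀ a b : ℝ, a ≤ b → (0 < a ∨ b < 0) → (∀ x ∈ Set.Icc a b, x ≠ 0 ∧ |x| ≤ 1/2) →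
      (∫ u in a..b, ‖K u‖) ≤ (2*(N:ℝ)+1) * B2 / 16 * ((-b⁻¹) - (-a⁻¹)) := by
    intro a b hab hne hcond
    calc (∫ u in a..b, ‖K u‖) ≤ ∫ u in a..b, (2*(N:ℝ)+1) * B2 / 16 * (u^2)⁻¹ := by
          apply intervalIntegral.integral_mono_on hab (hint _ _)
          · apply IntervalIntegrable.const_mul
            apply ContinuousOn.intervalIntegrable
            apply ContinuousOn.inv₀ (by fun_prop)
            intro x hx
            rw [Set.uIcc_of_le hab] at hx
            exact pow_ne_zero 2 (hcond x hx).1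
          · intro x hx
            exact P2 x (hcond x hx).1 (hcond x hx).2
      _ = (2*(N:ℝ)+1) * B2 / 16 * ((-b⁻¹) - (-a⁻¹)) := by
          rw [intervalIntegral.integral_const_mul, hinvint a b hab hne]
  have ht1 : (∫ u in (r:ℝ)..(1/2), ‖K u‖) ≤ (2*(N:ℝ)+1) * B2 / 16 * (r⁻¹ - 2) := by
    have h := htail r (1/2) (by linarith) (Or.inl hr) (fun x hx =>
      ⟨ne_of_gt (lt_of_lt_of_le hr hx.1), abs_le.2 ⟨by linarith [hx.1], hx.2⟩⟩)
    have heq : -((1/2):ℝ)⁻¹ - -r⁻¹ = r⁻¹ - 2 := by ring_nf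
    rw [heq] at h
    exact h
  have ht2 : (∫ u in (-(1/2):ℝ)..(-r), ‖K u‖) ≤ (2*(N:ℝ)+1) * B2 / 16 * (r⁻¹ - 2) := by
    have h := htail (-(1/2)) (-r) hr' (Or.inr (by linarith)) (fun x hx =>
      ⟨ne_of_lt (lt_of_le_of_lt hx.2 (by linarith)), abs_le.2 ⟨hx.1, by linarith [hx.2]⟩⟩)
    have heq : -(-r)⁻¹ - -(-((1:ℝ)/2))⁻¹ = r⁻¹ - 2 := by ring_nf
    rw [heq] at h
    exact h
  -- combine
  have hrinv : (0:ℝ) < r⁻¹ := by positivity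
  have hfin : 2 * ((2*(N:ℝ)+1) * B2 / 16 * (r⁻¹ - 2)) ≤ (2*(N:ℝ)+1)*B2/(2*r) := by
    rw [show (2*(N:ℝ)+1)*B2/(2*r) = (2*(N:ℝ)+1)*B2/2 * r⁻¹ by field_simp]
    nlinarith [mul_nonneg hNpos hB2]
  rw [hsplit]
  linarith [ht1, ht2, hmid]

lemma f_ae_bound {f : ℝ → ℂ} (hmf : Measurable f) (hfin : LinfN f ≠ ⊤) :
    ∀ᵐ t ∂(volume.restrict (Set.Icc (0:ℝ) 1)), ‖f t‖ ≤ (LinfN f).toReal := by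
  set M := (LinfN f).toReal with hMdef
  have h1 : ∀ᵐ t ∂muT, ‖f t‖ ≤ M := by
    filter_upwards [MeasureTheory.ae_le_eLpNormEssSup (f := f) (μ := muT)] with y hy
    have he : eLpNormEssSup f muT = LinfN f := (eLpNorm_exponent_top (f := f)).symm
    rw [he] at hy
    have := ENNReal.toReal_mono hfin hy
    simpa using this
  have hmA : MeasurableSet {t : ℝ | ¬ ‖f t‖ ≤ M} := by
    have : {t : ℝ | ¬ ‖f t‖ ≤ M} = {t : ℝ | M < ‖f t‖} := by
      ext t; simp [not_le]
    rw [this]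
    exact measurableSet_lt measurable_const hmf.norm
  rw [ae_iff] at h1 ⊢
  unfold muT at h1
  rw [Measure.restrict_apply hmA] at h1
  rw [Measure.restrict_apply hmA]
  apply le_antisymm _ (by simp)
  calc volume ({t : ℝ | ¬ ‖f t‖ ≤ M} ∩ Set.Icc 0 1)
      ≤ volume (({t : ℝ | ¬ ‖f t‖ ≤ M} ∩ Set.Ico 0 1) ∪ {(1:ℝ)}) := by
        apply measure_mono
        intro x hx
        rcases hx with ⟨hx1, hx2, hx3⟩
        by_cases hx4 : x = 1
        · exact Or.inr (by simp [hx4])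
        · exact Or.inl ⟨hx1, hx2, lt_of_le_of_ne hx3 hx4⟩
    _ ≤ volume ({t : ℝ | ¬ ‖f t‖ ≤ M} ∩ Set.Ico 0 1) + volume {(1:ℝ)} := measure_union_le _ _
    _ = 0 := by rw [h1, Real.volume_singleton, add_zero]

lemma conv_bound {f : ℝ → ℂ} (hmf : Measurable f) (hfin : LinfN f ≠ ⊤)
    (S : Finset ℤ) (b : ℤ → ℂ) (y : ℝ) :
    ‖∑ n ∈ S, b n * fCoeff f n * cE n y‖ ≤
      (LinfN f).toReal * ∫ u in (-(1/2):ℝ)..(1/2), ‖∑ n ∈ S, b n * cE n u‖ := by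
  set M := (LinfN f).toReal with hMdef
  have hM0 : 0 ≤ M := ENNReal.toReal_nonneg
  have hfb := f_ae_bound hmf hfin
  have hfi : IntervalIntegrable f volume 0 1 := by
    rw [intervalIntegrable_iff_integrableOn_Icc_of_le (by norm_num)]
    apply Integrable.mono' (g := fun _ => M) _ hmf.aestronglyMeasurable hfb
    rw [integrable_const_iff]
    right
    exact isFiniteMeasure_restrict.mpr (by simp [Real.volume_Icc])
  have hKsc : ∀ n : ℤ, Continuous fun t : ℝ => cE n (y - t) :=
    fun n => (continuous_cE n).comp (continuous_const.sub continuous_id)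
  have hterm : ∀ n ∈ S, b n * fCoeff f n * cE n y
      = ∫ t in (0:ℝ)..1, f t * (b n * cE n (y - t)) := by
    intro n _
    calc b n * fCoeff f n * cE n y
        = (b n * cE n y) * ∫ t in (0:ℝ)..1, f t * Complex.exp (-2*Real.pi*Complex.I*n*t) := by
          rw [fCoeff]; ring
      _ = ∫ t in (0:ℝ)..1, (b n * cE n y) * (f t * Complex.exp (-2*Real.pi*Complex.I*n*t)) :=
          (intervalIntegral.integral_const_mul _ _).symm
      _ = ∫ t in (0:ℝ)..1, f t * (b n * cE n (y - t)) := by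
          apply intervalIntegral.integral_congr
          intro t _
          dsimp only
          rw [← cE_mul_exp_neg n y t]
          ring
  have hswap : ∑ n ∈ S, b n * fCoeff f n * cE n y
      = ∫ t in (0:ℝ)..1, f t * (∑ n ∈ S, b n * cE n (y - t)) := by
    rw [Finset.sum_congr rfl hterm, ← intervalIntegral.integral_finset_sum]
    · congr 1
      ext t
      rw [Finset.mul_sum]
    · intro n _
      exact hfi.mul_continuousOn (Continuous.continuousOn (continuous_const.mul (hKsc n)))
  set KK : ℝ → ℝ := fun u => ‖∑ n ∈ S, b n * cE n u‖ with hKK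
  have hKc : Continuous KK :=
    Continuous.norm (continuous_finset_sum _ fun n _ => continuous_const.mul (continuous_cE n))
  have hper : Function.Periodic KK 1 := by
    intro u
    rw [hKK]
    simp only
    congr 1
    exact Finset.sum_congr rfl fun n _ => by rw [cE_periodic n u]
  have hInt1 : IntervalIntegrable (fun t => ‖f t * ∑ n ∈ S, b n * cE n (y - t)‖) volume 0 1 :=
    (hfi.mul_continuousOn (Continuous.continuousOn
      (continuous_finset_sum _ fun n _ => continuous_const.mul (hKsc n)))).norm
  calc ‖∑ n ∈ S, b n * fCoeff f n * cE n y‖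
      = ‖∫ t in (0:ℝ)..1, f t * (∑ n ∈ S, b n * cE n (y - t))‖ := by rw [hswap]
    _ ≤ ∫ t in (0:ℝ)..1, ‖f t * (∑ n ∈ S, b n * cE n (y - t))‖ :=
        intervalIntegral.norm_integral_le_integral_norm (by norm_num)
    _ ≤ ∫ t in (0:ℝ)..1, M * KK (y - t) := by
        apply intervalIntegral.integral_mono_ae_restrict (by norm_num) hInt1
        · exact (Continuous.intervalIntegrable (by fun_prop) _ _)
        · filter_upwards [hfb] with t ht
          rw [norm_mul]
          exact mul_le_mul_of_nonneg_right ht (norm_nonneg _)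
    _ = M * ∫ t in (0:ℝ)..1, KK (y - t) :=
        intervalIntegral.integral_const_mul _ _
    _ = M * ∫ u in (y-1)..y, KK u := by
        have h3 := intervalIntegral.integral_comp_sub_left (a := (0:ℝ)) (b := 1) KK y
        rw [sub_zero] at h3
        rw [h3]
    _ = M * ∫ u in (-(1/2):ℝ)..(1/2), KK u := by
        have h4 := hper.intervalIntegral_add_eq (y-1) (-(1/2))
        rw [sub_add_cancel] at h4
        rw [show (-(1/2):ℝ) + 1 = 1/2 by norm_num] at h4
        rw [h4]

lemma floor_half (y : ℝ) : 2 * ⌊y/2⌋ ≤ ⌊y⌋ ∧ ⌊y⌋ ≤ 2 * ⌊y/2⌋ + 1 := by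
  constructor
  · apply Int.le_floor.2
    push_cast
    have := Int.floor_le (y/2)
    linarith
  · have h1 := Int.lt_floor_add_one (y/2)
    have h2 : ⌊y⌋ < 2*⌊y/2⌋ + 2 := by
      apply Int.floor_lt.2
      push_cast
      linarith
    omega

lemma norm_intC (n : ℤ) : ‖((n:ℂ))‖ = |(n:ℝ)| := by
  rw [show ((n:ℂ)) = ((n:ℝ):ℂ) by push_cast; rfl, Complex.norm_real, Real.norm_eq_abs]

lemma norm_2piI : ‖(2*(Real.pi:ℂ)*Complex.I)‖ = 2*Real.pi := by
  rw [norm_mul, norm_mul, Complex.norm_I]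
  simp [Complex.norm_real, Real.norm_eq_abs, abs_of_pos Real.pi_pos]

lemma inv_2pi_le : (2*Real.pi)⁻¹ ≤ 6⁻¹ := by
  apply inv_anti₀ (by norm_num)
  nlinarith [Real.pi_gt_three]

lemma ofReal_ne_zero_of_abs {x : ℝ} {c : ℝ} (hc : 0 < c) (h : c ≤ |x|) : ((x:ℝ):ℂ) ≠ 0 := by
  intro hx
  rw [Complex.ofReal_eq_zero.mp hx] at h
  simp at h
  linarith

lemma EkOp_eq (S : Finset ℤ) (c : ℤ → ℂ) (hc0 : c 0 = 0) (k : ℕ) (x : ℝ) :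
    EkOp k (fun t => ∑ n ∈ S, c n * cE n t) x
      = (2:ℂ)^k * ((∑ n ∈ S, c n / (2 * Real.pi * Complex.I * n) *
            cE n ((⌊(2:ℝ)^k * x⌋ : ℝ)/(2:ℝ)^k + 1/(2:ℝ)^k))
          - ∑ n ∈ S, c n / (2 * Real.pi * Complex.I * n) *
            cE n ((⌊(2:ℝ)^k * x⌋ : ℝ)/(2:ℝ)^k)) := by
  unfold EkOp
  have h2k : ((2:ℝ)^k) ≠ 0 := by positivity
  set a : ℝ := (⌊(2:ℝ)^k * x⌋ : ℝ)/(2:ℝ)^k with ha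
  have hup : ((⌊(2:ℝ)^k * x⌋ : ℝ) + 1)/(2:ℝ)^k = a + 1/(2:ℝ)^k := by
    rw [ha]
    field_simp
  rw [hup]
  congr 1
  rw [intervalIntegral.integral_finset_sum (f := fun n t => c n * cE n t)
    (fun n _ => ((continuous_const.mul (continuous_cE n)).intervalIntegrable _ _))]
  rw [← Finset.sum_sub_distrib]
  apply Finset.sum_congr rfl
  intro n _
  by_cases hn0 : n = 0
  · subst hn0
    simp [hc0]
  · rw [intervalIntegral.integral_const_mul, integral_cE hn0]
    ring

lemma b1_second_diff {lam : ℝ} (hlam : 16 ≤ lam) (w : ℤ → ℂ) {C0 C1 C2 : ℝ}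
    (h0 : ∀ m, ‖w m‖ ≤ C0) (h1 : ∀ m : ℤ, ‖w m - w (m-1)‖ ≤ C1/lam)
    (h2 : ∀ m : ℤ, ‖w m - 2*w (m-1) + w (m-2)‖ ≤ C2/lam^2)
    (n : ℤ) (habs0 : lam/4 ≤ |(n:ℝ)|) (habs1 : lam/4 ≤ |(n:ℝ)-1|)
    (habs2 : lam/4 ≤ |(n:ℝ)-2|) :
    ‖w n / (2*Real.pi*Complex.I*(n:ℂ)) - 2*(w (n-1) / (2*Real.pi*Complex.I*((n:ℂ)-1)))
        + w (n-2) / (2*Real.pi*Complex.I*((n:ℂ)-2))‖ ≤ (64*C0 + 6*C1 + C2)/lam^3 := by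
  have hlam0 : (0:ℝ) < lam := by linarith
  have hq : (0:ℝ) < lam/4 := by linarith
  have hC0 : 0 ≤ C0 := le_trans (norm_nonneg _) (h0 0)
  have hC1 : 0 ≤ C1 := by
    have h := le_trans (norm_nonneg _) (h1 0)
    by_contra hc
    push_neg at hc
    have : C1/lam < 0 := div_neg_of_neg_of_pos hc hlam0
    linarith
  have hC2 : 0 ≤ C2 := by
    have h := le_trans (norm_nonneg _) (h2 0)
    by_contra hc
    push_neg at hc
    have : C2/lam^2 < 0 := div_neg_of_neg_of_pos hc (by positivity)
    linarith
  have hn0 : ((n:ℂ)) ≠ 0 := by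
    rw [show ((n:ℂ)) = ((n:ℝ):ℂ) by push_cast; rfl]
    exact ofReal_ne_zero_of_abs hq habs0
  have hn1 : ((n:ℂ)) - 1 ≠ 0 := by
    rw [show ((n:ℂ)) - 1 = (((n:ℝ) - 1 : ℝ):ℂ) by push_cast; ring]
    exact ofReal_ne_zero_of_abs hq habs1
  have hn2 : ((n:ℂ)) - 2 ≠ 0 := by
    rw [show ((n:ℂ)) - 2 = (((n:ℝ) - 2 : ℝ):ℂ) by push_cast; ring]
    exact ofReal_ne_zero_of_abs hq habs2
  have hpiC : (2*(Real.pi:ℂ)*Complex.I) ≠ 0 := by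
    simp [Real.pi_ne_zero, Complex.I_ne_zero]
  have hnormn : ‖((n:ℂ))‖ = |(n:ℝ)| := norm_intC n
  have hnormn1 : ‖((n:ℂ)) - 1‖ = |(n:ℝ) - 1| := by
    rw [show ((n:ℂ)) - 1 = (((n:ℝ) - 1 : ℝ):ℂ) by push_cast; ring, Complex.norm_real,
      Real.norm_eq_abs]
  have hnormn2 : ‖((n:ℂ)) - 2‖ = |(n:ℝ) - 2| := by
    rw [show ((n:ℂ)) - 2 = (((n:ℝ) - 2 : ℝ):ℂ) by push_cast; ring, Complex.norm_real,
      Real.norm_eq_abs]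
  set v0 : ℂ := (2*(Real.pi:ℂ)*Complex.I*(n:ℂ))⁻¹ with hv0def
  set v1 : ℂ := (2*(Real.pi:ℂ)*Complex.I*((n:ℂ)-1))⁻¹ with hv1def
  set v2 : ℂ := (2*(Real.pi:ℂ)*Complex.I*((n:ℂ)-2))⁻¹ with hv2def
  have hid : w n / (2*Real.pi*Complex.I*(n:ℂ)) - 2*(w (n-1) / (2*Real.pi*Complex.I*((n:ℂ)-1)))
      + w (n-2) / (2*Real.pi*Complex.I*((n:ℂ)-2))
      = w n * (v0 - 2*v1 + v2) + 2*((w n - w (n-1)) * (v1 - v2))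
        + (w n - 2*w (n-1) + w (n-2)) * v2 := by
    rw [hv0def, hv1def, hv2def]
    simp only [div_eq_mul_inv]
    ring
  rw [hid]
  have hv2bound : ‖v0 - 2*v1 + v2‖ ≤ 64/lam^3 := by
    have hval : v0 - 2*v1 + v2 = (2*(Real.pi:ℂ)*Complex.I)⁻¹ *
        (2 / ((n:ℂ) * ((n:ℂ)-1) * ((n:ℂ)-2))) := by
      rw [hv0def, hv1def, hv2def]
      field_simp
      ring
    rw [hval, norm_mul, norm_inv, norm_2piI, norm_div, norm_mul, norm_mul,
      hnormn, hnormn1, hnormn2]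
    have hb : (lam/4)^3 ≤ |(n:ℝ)| * |(n:ℝ)-1| * |(n:ℝ)-2| := by
      calc (lam/4)^3 = (lam/4) * (lam/4) * (lam/4) := by ring
        _ ≤ |(n:ℝ)| * |(n:ℝ)-1| * |(n:ℝ)-2| := by
            apply mul_le_mul (mul_le_mul habs0 habs1 hq.le (abs_nonneg _)) habs2 hq.le
            positivity
    rw [show ‖(2:ℂ)‖ = 2 by norm_num]
    calc (2*Real.pi)⁻¹ * (2 / (|(n:ℝ)| * |(n:ℝ)-1| * |(n:ℝ)-2|))
        ≤ 6⁻¹ * (2 / ((lam/4)^3)) := by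
          apply mul_le_mul inv_2pi_le
          · apply div_le_div₀ (by norm_num) le_rfl (by positivity) hb
          · positivity
          · norm_num
      _ = (64/3)/lam^3 := by
          field_simp
          ring
      _ ≤ 64/lam^3 := by
          apply div_le_div₀ (by norm_num) (by norm_num) (by positivity) le_rfl
  have hv1bound : ‖v1 - v2‖ ≤ 3/lam^2 := by
    have hval : v1 - v2 = (2*(Real.pi:ℂ)*Complex.I)⁻¹ * (-1 / (((n:ℂ)-1) * ((n:ℂ)-2))) := by
      rw [hv1def, hv2def]
      field_simp
      ring
    rw [hval, norm_mul, norm_inv, norm_2piI, norm_div, norm_mul, hnormn1, hnormn2]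
    have hb : (lam/4)^2 ≤ |(n:ℝ)-1| * |(n:ℝ)-2| := by
      calc (lam/4)^2 = (lam/4) * (lam/4) := by ring
        _ ≤ _ := mul_le_mul habs1 habs2 hq.le (abs_nonneg _)
    rw [show ‖(-1:ℂ)‖ = 1 by norm_num]
    calc (2*Real.pi)⁻¹ * (1 / (|(n:ℝ)-1| * |(n:ℝ)-2|))
        ≤ 6⁻¹ * (1 / ((lam/4)^2)) := by
          apply mul_le_mul inv_2pi_le
          · apply div_le_div₀ (by norm_num) le_rfl (by positivity) hb
          · positivity
          · norm_num
      _ = (8/3)/lam^2 := by field_simp; ring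
      _ ≤ 3/lam^2 := by
          apply div_le_div₀ (by norm_num) (by norm_num) (by positivity) le_rfl
  have hv0bound : ‖v2‖ ≤ 1/lam := by
    rw [hv2def, norm_inv, norm_mul, norm_2piI, hnormn2]
    have hb : lam/4 ≤ |(n:ℝ)-2| := habs2
    calc (2*Real.pi*|(n:ℝ)-2|)⁻¹ ≤ (2*3*(lam/4))⁻¹ := by
          apply inv_anti₀ (by positivity)
          have h3 : (3:ℝ) ≤ Real.pi := Real.pi_gt_three.le
          nlinarith [abs_nonneg ((n:ℝ)-2)]
      _ = (2/3)/lam := by field_simp; ring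
      _ ≤ 1/lam := by
          apply div_le_div₀ (by norm_num) (by norm_num) (by positivity) le_rfl
  calc ‖w n * (v0 - 2*v1 + v2) + 2*((w n - w (n-1)) * (v1 - v2))
        + (w n - 2*w (n-1) + w (n-2)) * v2‖
      ≤ ‖w n * (v0 - 2*v1 + v2) + 2*((w n - w (n-1)) * (v1 - v2))‖
        + ‖(w n - 2*w (n-1) + w (n-2)) * v2‖ := norm_add_le _ _
    _ ≤ ‖w n * (v0 - 2*v1 + v2)‖ + ‖2*((w n - w (n-1)) * (v1 - v2))‖
        + ‖(w n - 2*w (n-1) + w (n-2)) * v2‖ := by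
          gcongr
          exact norm_add_le _ _
    _ ≤ C0 * (64/lam^3) + 2*((C1/lam) * (3/lam^2)) + (C2/lam^2) * (1/lam) := by
        have e1 : ‖w n * (v0 - 2*v1 + v2)‖ ≤ C0 * (64/lam^3) := by
          rw [norm_mul]
          exact mul_le_mul (h0 n) hv2bound (norm_nonneg _) hC0
        have e2 : ‖2*((w n - w (n-1)) * (v1 - v2))‖ ≤ 2*((C1/lam) * (3/lam^2)) := by
          rw [norm_mul, norm_mul, show ‖(2:ℂ)‖ = 2 by norm_num]
          have := mul_le_mul (h1 n) hv1bound (norm_nonneg _)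
            (by positivity : (0:ℝ) ≤ C1/lam)
          linarith
        have e3 : ‖(w n - 2*w (n-1) + w (n-2)) * v2‖ ≤ (C2/lam^2) * (1/lam) := by
          rw [norm_mul]
          exact mul_le_mul (h2 n) hv0bound (norm_nonneg _) (by positivity)
        linarith
    _ = (64*C0 + 6*C1 + C2)/lam^3 := by field_simp; ring

lemma b2_second_diff {lam : ℝ} (hlam : 1 ≤ lam) (w : ℤ → ℂ) {C1 C2 : ℝ}
    (h1 : ∀ m : ℤ, ‖w m - w (m-1)‖ ≤ C1/lam)
    (h2 : ∀ m : ℤ, ‖w m - 2*w (m-1) + w (m-2)‖ ≤ C2/lam^2)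
    (n : ℤ) (habs : |(n:ℝ)-2| ≤ 6*lam) :
    ‖(2*Real.pi*Complex.I*(n:ℂ)) * w n - 2*((2*Real.pi*Complex.I*((n:ℂ)-1)) * w (n-1))
        + (2*Real.pi*Complex.I*((n:ℂ)-2)) * w (n-2)‖ ≤ (14*C1 + 42*C2)/lam := by
  have hlam0 : (0:ℝ) < lam := by linarith
  have hC1 : 0 ≤ C1 := by
    have h := le_trans (norm_nonneg _) (h1 0)
    by_contra hc
    push_neg at hc
    have : C1/lam < 0 := div_neg_of_neg_of_pos hc hlam0
    linarith
  have hC2 : 0 ≤ C2 := by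
    have h := le_trans (norm_nonneg _) (h2 0)
    by_contra hc
    push_neg at hc
    have : C2/lam^2 < 0 := div_neg_of_neg_of_pos hc (by positivity)
    linarith
  have hid : (2*Real.pi*Complex.I*(n:ℂ)) * w n - 2*((2*Real.pi*Complex.I*((n:ℂ)-1)) * w (n-1))
      + (2*Real.pi*Complex.I*((n:ℂ)-2)) * w (n-2)
      = (2*Real.pi*Complex.I) * (2*(w n - w (n-1)) + (w n - 2*w (n-1) + w (n-2))*((n:ℂ)-2)) := by
    ring
  rw [hid, norm_mul, norm_2piI]
  have hnormn2 : ‖((n:ℂ)) - 2‖ = |(n:ℝ) - 2| := by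
    rw [show ((n:ℂ)) - 2 = (((n:ℝ) - 2 : ℝ):ℂ) by push_cast; ring, Complex.norm_real,
      Real.norm_eq_abs]
  have hinner : ‖2*(w n - w (n-1)) + (w n - 2*w (n-1) + w (n-2))*((n:ℂ)-2)‖
      ≤ 2*(C1/lam) + (C2/lam^2)*(6*lam) := by
    calc ‖2*(w n - w (n-1)) + (w n - 2*w (n-1) + w (n-2))*((n:ℂ)-2)‖
        ≤ ‖2*(w n - w (n-1))‖ + ‖(w n - 2*w (n-1) + w (n-2))*((n:ℂ)-2)‖ := norm_add_le _ _
      _ ≤ 2*(C1/lam) + (C2/lam^2)*(6*lam) := by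
          rw [norm_mul, norm_mul, hnormn2, show ‖(2:ℂ)‖ = 2 by norm_num]
          have e1 := h1 n
          have e2 := mul_le_mul (h2 n) habs (abs_nonneg _)
            (by positivity : (0:ℝ) ≤ C2/lam^2)
          linarith
  calc 2*Real.pi * ‖2*(w n - w (n-1)) + (w n - 2*w (n-1) + w (n-2))*((n:ℂ)-2)‖
      ≤ 2*Real.pi * (2*(C1/lam) + (C2/lam^2)*(6*lam)) := by
        apply mul_le_mul_of_nonneg_left hinner (by positivity)
    _ ≤ 7 * (2*(C1/lam) + (C2/lam^2)*(6*lam)) := by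
        apply mul_le_mul_of_nonneg_right _ (by positivity)
        nlinarith [Real.pi_lt_d2]
    _ = 14*(C1/lam) + 42*(C2/lam) := by field_simp; ring
    _ = (14*C1 + 42*C2)/lam := by ring

set_option maxHeartbeats 2000000 in
/-- ‖D_k L_λ f‖_∞ ≤ C min(2^k/λ, λ 2^{-k}) ‖f‖_∞ for k ≥ 1. -/
theorem stmt2 (ψ : ℝ → ℝ) (hs : ContDiff ℝ (⊤ : ℕ∞) ψ) (he : ∀ s, ψ (-s) = ψ s)
    (hsupp : Function.support ψ ⊆ {s : ℝ | 1/2 < |s| ∧ |s| < 2}) :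
    ∃ C > (0:ℝ), ∀ lam : ℝ, 1 ≤ lam → ∀ k : ℕ, 1 ≤ k → ∀ f : ℝ → ℂ,
      Measurable f → Function.Periodic f 1 → LinfN f ≠ ⊤ →
      LinfN (DkOp k (multOp (fun n => ((ψ ((n:ℝ) / lam) : ℝ) : ℂ)) f)) ≤
        ENNReal.ofReal (C * min ((2:ℝ)^k / lam) (lam / (2:ℝ)^k)) * LinfN f := by
  have hψz : ∀ s : ℝ, ¬(1/2 < |s| ∧ |s| < 2) → ψ s = 0 := by
    intro s h
    by_contra hc
    exact h (hsupp (Function.mem_support.2 hc))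
  have hψ0 : ψ 0 = 0 := hψz 0 (by norm_num)
  have hCS : HasCompactSupport ψ := by
    apply HasCompactSupport.intro (isCompact_Icc (a := (-2:ℝ)) (b := 2))
    intro x hx
    apply hψz
    rintro ⟨_, h2⟩
    exact hx (abs_le.mp h2.le)
  have hsE : ContDiff ℝ ((⊤:ℕ∞)) ψ := hs.of_le (by simp)
  have hd1 : ContDiff ℝ ((⊤:ℕ∞)) (deriv ψ) := (contDiff_infty_iff_deriv.mp hsE).2
  have hd2 : ContDiff ℝ ((⊤:ℕ∞)) (deriv (deriv ψ)) := (contDiff_infty_iff_deriv.mp hd1).2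
  obtain ⟨C0, hC0⟩ := hCS.exists_bound_of_continuous hs.continuous
  obtain ⟨C1, hC1⟩ := hCS.deriv.exists_bound_of_continuous hd1.continuous
  obtain ⟨C2, hC2⟩ := hCS.deriv.deriv.exists_bound_of_continuous hd2.continuous
  have hC0n : 0 ≤ C0 := le_trans (norm_nonneg _) (hC0 0)
  have hC1n : 0 ≤ C1 := le_trans (norm_nonneg _) (hC1 0)
  have hC2n : 0 ≤ C2 := le_trans (norm_nonneg _) (hC2 0)
  set CC : ℝ := C0 + C1 + C2 + 1 with hCCdef
  have hCC1 : 1 ≤ CC := by linarith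
  have hCC0 : (0:ℝ) < CC := by linarith
  refine ⟨2^30 * CC, by positivity, ?_⟩
  intro lam hlam k hk f hmf hper hfin
  obtain ⟨j, rfl⟩ : ∃ j : ℕ, k = j + 1 := ⟨k - 1, by omega⟩
  have hlam0 : (0:ℝ) < lam := by linarith
  set M : ℝ := (LinfN f).toReal with hM
  have hM0 : 0 ≤ M := ENNReal.toReal_nonneg
  have hψd : ∀ y, HasDerivAt ψ (deriv ψ y) y :=
    fun y => ((hsE.differentiable (by simp)) y).hasDerivAt
  have hψd2 : ∀ y, HasDerivAt (deriv ψ) (deriv (deriv ψ) y) y :=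
    fun y => ((hd1.differentiable (by simp)) y).hasDerivAt
  set u : ℤ → ℂ := fun n => ((ψ ((n:ℝ) / lam) : ℝ) : ℂ) with hu
  set b1 : ℤ → ℂ := fun n => u n / (2*Real.pi*Complex.I*(n:ℂ)) with hb1
  set b2 : ℤ → ℂ := fun n => (2*Real.pi*Complex.I*(n:ℂ)) * u n with hb2
  set N : ℤ := 2*⌈lam⌉ + 2 with hNdef
  have hceil : lam ≤ ((⌈lam⌉:ℤ) : ℝ) := Int.le_ceil lam
  have hceil2 : ((⌈lam⌉:ℤ):ℝ) < lam + 1 := Int.ceil_lt_add_one lam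
  have hN1 : 1 ≤ N := by
    have h1 : (1:ℤ) ≤ ⌈lam⌉ := by
      have : ((1:ℤ):ℝ) ≤ ((⌈lam⌉:ℤ):ℝ) := by push_cast; linarith
      exact_mod_cast this
    omega
  have hNr : ((N:ℤ):ℝ) = 2*((⌈lam⌉:ℤ):ℝ) + 2 := by rw [hNdef]; push_cast; ring
  have hNub : 2*((N:ℤ):ℝ)+1 ≤ 13*lam := by rw [hNr]; linarith
  have hN2lam : 2*lam ≤ ((N:ℤ):ℝ) - 2 := by rw [hNr]; linarith
  -- support facts
  have hu_supp : ∀ n : ℤ, u n ≠ 0 → lam/2 < |(n:ℝ)| ∧ |(n:ℝ)| < 2*lam := by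
    intro n hn
    have hψn : ψ ((n:ℝ)/lam) ≠ 0 := by
      intro h
      apply hn
      rw [hu]
      simp [h]
    have hmem : 1/2 < |(n:ℝ)/lam| ∧ |(n:ℝ)/lam| < 2 := by
      by_contra hc
      exact hψn (hψz _ hc)
    rw [abs_div, abs_of_pos hlam0] at hmem
    constructor
    · rw [div_lt_div_iff₀ (by norm_num) hlam0] at hmem
      linarith [hmem.1]
    · rw [div_lt_iff₀ hlam0] at hmem
      linarith [hmem.2]
  have hbz : ∀ n : ℤ, (n < -(N-2) ∨ N-2 < n) → u n = 0 := by
    intro n hn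
    by_contra hc
    have h2 := (hu_supp n hc).2
    have hN2 : ((N:ℤ):ℝ) - 2 ≤ |(n:ℝ)| := by
      rcases hn with h | h
      · have h' : ((n:ℤ):ℝ) < -(((N:ℤ):ℝ) - 2) := by
          have : ((n:ℤ):ℝ) < ((-(N-2):ℤ):ℝ) := by exact_mod_cast h
          push_cast at this
          linarith
        calc ((N:ℤ):ℝ) - 2 ≤ -((n:ℤ):ℝ) := by linarith
          _ ≤ |(n:ℝ)| := neg_le_abs _
      · have h' : ((N:ℤ):ℝ) - 2 < ((n:ℤ):ℝ) := by
          have : ((N-2:ℤ):ℝ) < ((n:ℤ):ℝ) := by exact_mod_cast h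
          push_cast at this
          linarith
        calc ((N:ℤ):ℝ) - 2 ≤ ((n:ℤ):ℝ) := h'.le
          _ ≤ |(n:ℝ)| := le_abs_self _
    linarith
  have hb1z : ∀ n : ℤ, (n < -(N-2) ∨ N-2 < n) → b1 n = 0 := by
    intro n hn
    rw [hb1]
    simp [hbz n hn]
  have hb2z : ∀ n : ℤ, (n < -(N-2) ∨ N-2 < n) → b2 n = 0 := by
    intro n hn
    rw [hb2]
    simp [hbz n hn]
  -- u bounds
  have hu0 : ∀ m : ℤ, ‖u m‖ ≤ C0 := by
    intro m
    rw [hu]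
    simp only [Complex.norm_real]
    exact hC0 _
  have hu1 : ∀ m : ℤ, ‖u m - u (m-1)‖ ≤ C1/lam := by
    intro m
    rw [hu]
    simp only
    rw [show ((ψ ((m:ℝ)/lam) : ℝ):ℂ) - ((ψ (((m-1:ℤ):ℝ)/lam) : ℝ):ℂ)
        = (((ψ ((m:ℝ)/lam) - ψ ((((m:ℝ)-1))/lam)) : ℝ):ℂ) by push_cast; ring]
    rw [Complex.norm_real, Real.norm_eq_abs]
    have hmv := mvt_bound (E := ℝ) hψd hC1 (((m:ℝ)-1)/lam) ((m:ℝ)/lam)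
    have harg : |(m:ℝ)/lam - ((m:ℝ)-1)/lam| = 1/lam := by
      rw [show (m:ℝ)/lam - ((m:ℝ)-1)/lam = 1/lam by field_simp; ring]
      exact abs_of_pos (by positivity)
    rw [harg] at hmv
    calc |ψ ((m:ℝ)/lam) - ψ (((m:ℝ)-1)/lam)| ≤ C1 * (1/lam) := by
          simpa [Real.norm_eq_abs] using hmv
      _ = C1/lam := by ring
  have hu2 : ∀ m : ℤ, ‖u m - 2*u (m-1) + u (m-2)‖ ≤ C2/lam^2 := by
    intro m
    rw [hu]
    simp only
    rw [show ((ψ ((m:ℝ)/lam) : ℝ):ℂ) - 2*((ψ (((m-1:ℤ):ℝ)/lam) : ℝ):ℂ)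
          + ((ψ (((m-2:ℤ):ℝ)/lam) : ℝ):ℂ)
        = (((ψ ((m:ℝ)/lam) - 2*ψ ((((m:ℝ)-1))/lam) + ψ ((((m:ℝ)-2))/lam)) : ℝ):ℂ) by
      push_cast; ring]
    rw [Complex.norm_real, Real.norm_eq_abs]
    have hsd := second_diff_bound (E := ℝ) hψd hψd2 hC2 (((m:ℝ)-2)/lam) (1/lam)
      (by positivity)
    have e1 : ((m:ℝ)-2)/lam + 2*(1/lam) = (m:ℝ)/lam := by
      field_simp
      try ring
    have e2 : ((m:ℝ)-2)/lam + 1/lam = ((m:ℝ)-1)/lam := by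
      field_simp
      try ring
    rw [e1, e2] at hsd
    calc |ψ ((m:ℝ)/lam) - 2*ψ (((m:ℝ)-1)/lam) + ψ (((m:ℝ)-2)/lam)|
        = ‖(ψ ((m:ℝ)/lam) - ψ (((m:ℝ)-1)/lam)) - (ψ (((m:ℝ)-1)/lam) - ψ (((m:ℝ)-2)/lam))‖ := by
          rw [Real.norm_eq_abs]
          congr 1
          ring
      _ ≤ C2 * (1/lam)^2 := hsd
      _ = C2/lam^2 := by ring
  -- B0, B2 for b1
  have hb1B0 : ∀ n : ℤ, ‖b1 n‖ ≤ C0/lam := by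
    intro n
    by_cases hun : u n = 0
    · rw [hb1]
      simp [hun]
      positivity
    · obtain ⟨hlow, _⟩ := hu_supp n hun
      rw [hb1]
      simp only
      rw [norm_div, norm_mul, norm_2piI, norm_intC]
      apply div_le_div₀ hC0n (hu0 n) hlam0
      nlinarith [Real.pi_gt_three, abs_nonneg ((n:ℝ))]
  have hb1B2 : ∀ n : ℤ, ‖b1 n - 2*b1 (n-1) + b1 (n-2)‖ ≤ 1024*CC/lam^3 := by
    intro n
    rcases le_or_gt 16 lam with h16 | h16
    · by_cases hall : u n = 0 ∧ u (n-1) = 0 ∧ u (n-2) = 0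
      · rw [hb1]
        simp [hall.1, hall.2.1, hall.2.2]
        positivity
      · have hkey : ∀ i : ℝ, 0 ≤ i → i ≤ 2 → lam/4 ≤ |(n:ℝ) - i| := by
          have hex : ∃ jj : ℝ, 0 ≤ jj ∧ jj ≤ 2 ∧ lam/2 < |(n:ℝ) - jj| := by
            rcases not_and_or.mp hall with h | h'
            · refine ⟨0, le_rfl, by norm_num, ?_⟩
              simpa using (hu_supp n h).1
            rcases not_and_or.mp h' with h | h
            · refine ⟨1, by norm_num, by norm_num, ?_⟩
              have := (hu_supp (n-1) h).1
              push_cast at this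
              convert this using 2
            · refine ⟨2, by norm_num, by norm_num, ?_⟩
              have := (hu_supp (n-2) h).1
              push_cast at this
              convert this using 2
          obtain ⟨jj, hjj0, hjj2, hjjb⟩ := hex
          intro i hi0 hi2
          have htri : |(n:ℝ) - jj| ≤ |(n:ℝ) - i| + |i - jj| := by
            calc |(n:ℝ) - jj| = |((n:ℝ) - i) + (i - jj)| := by ring_nf
              _ ≤ |(n:ℝ) - i| + |i - jj| := abs_add_le _ _
          have hij : |i - jj| ≤ 2 := abs_le.2 ⟨by linarith, by linarith⟩
          linarith
        have happ := b1_second_diff h16 u hu0 hu1 hu2 n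
          (by simpa using hkey 0 le_rfl (by norm_num))
          (by simpa using hkey 1 (by norm_num) (by norm_num))
          (by simpa using hkey 2 (by norm_num) (by norm_num))
        have hcast1 : ((n-1:ℤ):ℂ) = (n:ℂ) - 1 := by push_cast; ring
        have hcast2 : ((n-2:ℤ):ℂ) = (n:ℂ) - 2 := by push_cast; ring
        rw [hb1]
        simp only
        rw [hcast1, hcast2]
        calc ‖u n / (2*Real.pi*Complex.I*(n:ℂ)) - 2*(u (n-1) / (2*Real.pi*Complex.I*((n:ℂ)-1)))
              + u (n-2) / (2*Real.pi*Complex.I*((n:ℂ)-2))‖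
            ≤ (64*C0 + 6*C1 + C2)/lam^3 := happ
          _ ≤ 1024*CC/lam^3 := by
              apply div_le_div₀ (by positivity) _ (by positivity) le_rfl
              rw [hCCdef]
              linarith
    · calc ‖b1 n - 2*b1 (n-1) + b1 (n-2)‖
          ≤ ‖b1 n - 2*b1 (n-1)‖ + ‖b1 (n-2)‖ := norm_add_le _ _
        _ ≤ ‖b1 n‖ + ‖2*b1 (n-1)‖ + ‖b1 (n-2)‖ := by
            linarith [norm_sub_le (b1 n) (2*b1 (n-1))]
        _ ≤ C0/lam + 2*(C0/lam) + C0/lam := by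
            rw [norm_mul, show ‖(2:ℂ)‖ = 2 by norm_num]
            have g1 := hb1B0 n
            have g2 := hb1B0 (n-1)
            have g3 := hb1B0 (n-2)
            linarith
        _ = 4*C0/lam := by ring
        _ ≤ 1024*CC/lam^3 := by
            rw [div_le_div_iff₀ hlam0 (by positivity)]
            have hCle : C0 ≤ CC := by rw [hCCdef]; linarith
            have hl2 : lam^2 ≤ 256 := by nlinarith
            have key1 : 4*C0*lam^3 ≤ 1024*C0*lam := by nlinarith [mul_nonneg hC0n hlam0.le]
            have key2 : 1024*C0*lam ≤ 1024*CC*lam := by nlinarith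
            linarith
  -- B0, B2 for b2
  have hb2B0 : ∀ n : ℤ, ‖b2 n‖ ≤ 13*CC*lam := by
    intro n
    by_cases hun : u n = 0
    · rw [hb2]
      simp [hun]
      positivity
    · obtain ⟨_, hup⟩ := hu_supp n hun
      rw [hb2]
      simp only
      rw [norm_mul, norm_mul, norm_2piI, norm_intC]
      have hCle : C0 ≤ CC := by rw [hCCdef]; linarith
      calc 2*Real.pi*|(n:ℝ)| * ‖u n‖ ≤ 2*Real.pi*|(n:ℝ)| * C0 := by
            apply mul_le_mul_of_nonneg_left (hu0 n) (by positivity)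
        _ ≤ 13*CC*lam := by
            have h1 : 2*Real.pi*|(n:ℝ)| ≤ 13*lam := by
              nlinarith [Real.pi_lt_d2, abs_nonneg ((n:ℝ)), Real.pi_gt_three]
            calc 2*Real.pi*|(n:ℝ)| * C0 ≤ 13*lam * C0 :=
                  mul_le_mul_of_nonneg_right h1 hC0n
              _ ≤ 13*CC*lam := by nlinarith
  have hb2B2 : ∀ n : ℤ, ‖b2 n - 2*b2 (n-1) + b2 (n-2)‖ ≤ 64*CC/lam := by
    intro n
    by_cases hall : u n = 0 ∧ u (n-1) = 0 ∧ u (n-2) = 0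
    · rw [hb2]
      simp [hall.1, hall.2.1, hall.2.2]
      positivity
    · have habs : |(n:ℝ) - 2| ≤ 6*lam := by
        have hex : ∃ jj : ℝ, 0 ≤ jj ∧ jj ≤ 2 ∧ |(n:ℝ) - jj| < 2*lam := by
          rcases not_and_or.mp hall with h | h'
          · refine ⟨0, le_rfl, by norm_num, ?_⟩
            simpa using (hu_supp n h).2
          rcases not_and_or.mp h' with h | h
          · refine ⟨1, by norm_num, by norm_num, ?_⟩
            have := (hu_supp (n-1) h).2
            push_cast at this
            convert this using 2
          · refine ⟨2, by norm_num, by norm_num, ?_⟩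
            have := (hu_supp (n-2) h).2
            push_cast at this
            convert this using 2
        obtain ⟨jj, hjj0, hjj2, hjjb⟩ := hex
        have htri : |(n:ℝ) - 2| ≤ |(n:ℝ) - jj| + |jj - 2| := by
          calc |(n:ℝ) - 2| = |((n:ℝ) - jj) + (jj - 2)| := by ring_nf
            _ ≤ |(n:ℝ) - jj| + |jj - 2| := abs_add_le _ _
        have hjjabs : |jj - 2| ≤ 2 := abs_le.2 ⟨by linarith, by linarith⟩
        linarith
      have happ := b2_second_diff hlam u hu1 hu2 n habs
      have hcast1 : ((n-1:ℤ):ℂ) = (n:ℂ) - 1 := by push_cast; ring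
      have hcast2 : ((n-2:ℤ):ℂ) = (n:ℂ) - 2 := by push_cast; ring
      rw [hb2]
      simp only
      rw [hcast1, hcast2]
      calc ‖(2*Real.pi*Complex.I*(n:ℂ)) * u n - 2*((2*Real.pi*Complex.I*((n:ℂ)-1)) * u (n-1))
            + (2*Real.pi*Complex.I*((n:ℂ)-2)) * u (n-2)‖
          ≤ (14*C1 + 42*C2)/lam := happ
        _ ≤ 64*CC/lam := by
            apply div_le_div₀ (by positivity) _ hlam0 le_rfl
            rw [hCCdef]
            linarith
  -- kernel integrals
  have hrpos : (0:ℝ) < 1/(2*lam) := by positivity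
  have hrle : 1/(2*lam) ≤ 1/2 := by
    rw [div_le_div_iff₀ (by positivity) (by norm_num)]
    linarith
  have hIK1 : (∫ u' in (-(1/2):ℝ)..(1/2), ‖∑ n ∈ Finset.Icc (-N) N, b1 n * cE n u'‖)
      ≤ 2^14*CC/lam := by
    have h := kernel_L1_bound N hN1 b1 hb1z hb1B0 hb1B2 hrpos hrle
    apply le_trans h
    have heq : 2*(1/(2*lam))*(2*((N:ℤ):ℝ)+1)*(C0/lam)
        + (2*((N:ℤ):ℝ)+1)*(1024*CC/lam^3)/(2*(1/(2*lam)))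
        = (2*((N:ℤ):ℝ)+1)*C0/lam^2 + (2*((N:ℤ):ℝ)+1)*1024*CC/lam^2 := by
      field_simp
    rw [heq]
    rw [← add_div, div_le_div_iff₀ (by positivity) hlam0]
    have hCle : C0 ≤ CC := by rw [hCCdef]; linarith
    have hP0 : (0:ℝ) ≤ 2*((N:ℤ):ℝ)+1 := by
      have : (1:ℝ) ≤ ((N:ℤ):ℝ) := by exact_mod_cast hN1
      linarith
    nlinarith [mul_le_mul_of_nonneg_right hNub (mul_nonneg hC0n hlam0.le),
      mul_le_mul_of_nonneg_right hNub (mul_nonneg (by positivity : (0:ℝ) ≤ 1024*CC) hlam0.le),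
      mul_le_mul_of_nonneg_right hCle (by positivity : (0:ℝ) ≤ 13*lam*lam)]
  have hIK2 : (∫ u' in (-(1/2):ℝ)..(1/2), ‖∑ n ∈ Finset.Icc (-N) N, b2 n * cE n u'‖)
      ≤ 2^10*CC*lam := by
    have h := kernel_L1_bound N hN1 b2 hb2z hb2B0 hb2B2 hrpos hrle
    apply le_trans h
    have heq : 2*(1/(2*lam))*(2*((N:ℤ):ℝ)+1)*(13*CC*lam)
        + (2*((N:ℤ):ℝ)+1)*(64*CC/lam)/(2*(1/(2*lam)))
        = 13*(2*((N:ℤ):ℝ)+1)*CC + 64*(2*((N:ℤ):ℝ)+1)*CC := by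
      field_simp
    rw [heq]
    nlinarith [mul_le_mul_of_nonneg_right hNub (by positivity : (0:ℝ) ≤ 13*CC),
      mul_le_mul_of_nonneg_right hNub (by positivity : (0:ℝ) ≤ 64*CC)]

  -- finite-sum representation of the multiplier operator
  set S : Finset ℤ := Finset.Icc (-N) N with hS
  set co : ℤ → ℂ := fun n => u n * fCoeff f n with hco
  have hco0 : co 0 = 0 := by
    rw [hco]
    simp only
    have h0 : u 0 = 0 := by
      rw [hu]
      simp [hψ0]
    rw [h0, zero_mul]
  have hL : multOp u f = fun x => ∑ n ∈ S, co n * cE n x := by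
    funext x
    show (∑' n : ℤ, u n * fCoeff f n * Complex.exp (2 * Real.pi * Complex.I * n * x)) = _
    rw [tsum_eq_sum (s := S) ?side]
    case side =>
      intro n hn
      have hz : u n = 0 := by
        apply hbz
        rw [hS] at hn
        simp only [Finset.mem_Icc, not_and_or, not_le] at hn
        omega
      rw [hz, zero_mul, zero_mul]
    rfl
  rw [hL]
  set G : ℝ → ℂ := fun y => ∑ n ∈ S, co n / (2*Real.pi*Complex.I*(n:ℂ)) * cE n y with hG
  have hGd : ∀ y, HasDerivAt G (∑ n ∈ S, co n * cE n y) y := by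
    intro y
    rw [hG]
    apply HasDerivAt.fun_sum
    intro n _
    have hd := (hasDerivAt_cE n y).const_mul (co n / (2*Real.pi*Complex.I*(n:ℂ)))
    refine hd.congr_deriv ?_
    by_cases hn0 : n = 0
    · subst hn0
      simp [hco0]
    · have hdne : (2*(Real.pi:ℂ)*Complex.I*(n:ℂ)) ≠ 0 := by
        simp [Real.pi_ne_zero, Complex.I_ne_zero, Int.cast_ne_zero.mpr hn0]
      field_simp
  have hGd2 : ∀ y, HasDerivAt (fun y => ∑ n ∈ S, co n * cE n y)
      (∑ n ∈ S, ((2*Real.pi*Complex.I*(n:ℂ)) * co n) * cE n y) y := by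
    intro y
    apply HasDerivAt.fun_sum
    intro n _
    have hd := (hasDerivAt_cE n y).const_mul (co n)
    refine hd.congr_deriv ?_
    ring
  have hGbound : ∀ y, ‖G y‖ ≤ M * (2^14*CC/lam) := by
    intro y
    have hshape : G y = ∑ n ∈ S, b1 n * fCoeff f n * cE n y := by
      rw [hG]
      apply Finset.sum_congr rfl
      intro n _
      rw [hco, hb1]
      simp only
      ring
    rw [hshape]
    calc ‖∑ n ∈ S, b1 n * fCoeff f n * cE n y‖
        ≤ M * ∫ u' in (-(1/2):ℝ)..(1/2), ‖∑ n ∈ S, b1 n * cE n u'‖ :=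
          conv_bound hmf hfin S b1 y
      _ ≤ M * (2^14*CC/lam) := mul_le_mul_of_nonneg_left hIK1 hM0
  have hG2bound : ∀ y, ‖∑ n ∈ S, ((2*Real.pi*Complex.I*(n:ℂ)) * co n) * cE n y‖
      ≤ M * (2^10*CC*lam) := by
    intro y
    have hshape : (∑ n ∈ S, ((2*Real.pi*Complex.I*(n:ℂ)) * co n) * cE n y)
        = ∑ n ∈ S, b2 n * fCoeff f n * cE n y := by
      apply Finset.sum_congr rfl
      intro n _
      rw [hco, hb2]
      simp only
      ring
    rw [hshape]
    calc ‖∑ n ∈ S, b2 n * fCoeff f n * cE n y‖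
        ≤ M * ∫ u' in (-(1/2):ℝ)..(1/2), ‖∑ n ∈ S, b2 n * cE n u'‖ :=
          conv_bound hmf hfin S b2 y
      _ ≤ M * (2^10*CC*lam) := mul_le_mul_of_nonneg_left hIK2 hM0
  -- pointwise bound
  have hpt : ∀ x : ℝ, ‖DkOp (j+1) (fun x => ∑ n ∈ S, co n * cE n x) x‖
      ≤ 2^30*CC * min ((2:ℝ)^(j+1)/lam) (lam/(2:ℝ)^(j+1)) * M := by
    intro x
    have e1 := EkOp_eq S co hco0 (j+1) x
    have e0 := EkOp_eq S co hco0 j x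
    have hGy : ∀ y, (∑ n ∈ S, co n / (2*Real.pi*Complex.I*(n:ℂ)) * cE n y) = G y :=
      fun _ => rfl
    simp only [hGy] at e1 e0
    have hfloor := floor_half ((2:ℝ)^(j+1) * x)
    have harg : (2:ℝ)^(j+1)*x/2 = (2:ℝ)^j * x := by rw [pow_succ]; ring
    rw [harg] at hfloor
    set A : ℝ := (2:ℝ)^(j+1) with hA
    have hA0 : (0:ℝ) < A := by positivity
    set hh : ℝ := 1/A with hhh
    have hhh0 : 0 ≤ hh := by positivity
    set m : ℤ := ⌊A * x⌋ with hm'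
    set t : ℤ := ⌊(2:ℝ)^j * x⌋ with ht'
    set a : ℝ := (m:ℝ)/A with ha
    set a' : ℝ := (t:ℝ)/(2:ℝ)^j with ha2
    have h2j0 : ((2:ℝ)^j) ≠ 0 := by positivity
    have hApow : A = 2*(2:ℝ)^j := by rw [hA, pow_succ]; ring
    have h2j' : 1/(2:ℝ)^j = 2*hh := by
      rw [hhh, hApow]
      field_simp
    rw [h2j'] at e0
    have hX : ∀ b : ℝ, ‖(G (b+2*hh) - G (b+hh)) - (G (b+hh) - G b)‖
        ≤ min (4*(M*(2^14*CC/lam))) ((M*(2^10*CC*lam))*hh^2) := by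
      intro b
      apply le_min
      · have g1 := hGbound (b+2*hh)
        have g2 := hGbound (b+hh)
        have g3 := hGbound b
        calc ‖(G (b+2*hh) - G (b+hh)) - (G (b+hh) - G b)‖
            ≤ ‖G (b+2*hh) - G (b+hh)‖ + ‖G (b+hh) - G b‖ := norm_sub_le _ _
          _ ≤ (‖G (b+2*hh)‖ + ‖G (b+hh)‖) + (‖G (b+hh)‖ + ‖G b‖) := by
              have u1 := norm_sub_le (G (b+2*hh)) (G (b+hh))
              have u2 := norm_sub_le (G (b+hh)) (G b)
              linarith
          _ ≤ 4*(M*(2^14*CC/lam)) := by linarith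
      · exact second_diff_bound hGd hGd2 hG2bound b hh hhh0
    have hnorm2c : ‖(2:ℂ)^j‖ = (2:ℝ)^j := by
      rw [norm_pow]
      norm_num
    have hfinal : ∀ b : ℝ, (2:ℝ)^j * ‖(G (b+2*hh) - G (b+hh)) - (G (b+hh) - G b)‖
        ≤ 2^30*CC * min (A/lam) (lam/A) * M := by
      intro b
      rcases le_total lam A with hcase | hcase
      · have hmin : min (A/lam) (lam/A) = lam/A := by
          apply min_eq_right
          rw [div_le_div_iff₀ hA0 hlam0]
          nlinarith
        rw [hmin]
        calc (2:ℝ)^j * ‖(G (b+2*hh) - G (b+hh)) - (G (b+hh) - G b)‖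
            ≤ (2:ℝ)^j * ((M*(2^10*CC*lam))*hh^2) := by
              apply mul_le_mul_of_nonneg_left (le_trans (hX b) (min_le_right _ _))
                (by positivity)
          _ = (2^9*CC*lam*M)/A := by
              rw [hhh, hApow]
              field_simp
          _ ≤ 2^30*CC * (lam/A) * M := by
              rw [show (2:ℝ)^30*CC * (lam/A) * M = (2^30*CC*lam*M)/A by ring]
              apply div_le_div₀ (by positivity) _ hA0 le_rfl
              nlinarith [mul_nonneg (mul_nonneg hCC0.le hlam0.le) hM0]
      · have hmin : min (A/lam) (lam/A) = A/lam := by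
          apply min_eq_left
          rw [div_le_div_iff₀ hlam0 hA0]
          nlinarith
        rw [hmin]
        calc (2:ℝ)^j * ‖(G (b+2*hh) - G (b+hh)) - (G (b+hh) - G b)‖
            ≤ (2:ℝ)^j * (4*(M*(2^14*CC/lam))) := by
              apply mul_le_mul_of_nonneg_left (le_trans (hX b) (min_le_left _ _))
                (by positivity)
          _ = (2^15*A*CC*M)/lam := by
              rw [hApow]
              field_simp
              ring
          _ ≤ 2^30*CC * (A/lam) * M := by
              rw [show (2:ℝ)^30*CC * (A/lam) * M = (2^30*CC*A*M)/lam by ring]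
              apply div_le_div₀ (by positivity) _ hlam0 le_rfl
              nlinarith [mul_nonneg (mul_nonneg hCC0.le hA0.le) hM0]
    show ‖EkOp (j+1) (fun x => ∑ n ∈ S, co n * cE n x) x
        - EkOp j (fun x => ∑ n ∈ S, co n * cE n x) x‖
      ≤ 2^30*CC * min (A/lam) (lam/A) * M
    rw [e1, e0]
    rcases (show m = 2*t ∨ m = 2*t+1 by omega) with hmc | hmc
    · have hpr : a' = a := by
        rw [ha2, ha, hmc, hApow]
        push_cast
        field_simp
      rw [hpr]
      rw [show (2:ℂ)^(j+1) * (G (a + hh) - G a) - (2:ℂ)^j * (G (a + 2*hh) - G a)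
          = -((2:ℂ)^j) * ((G (a+2*hh) - G (a+hh)) - (G (a+hh) - G a)) by
        rw [pow_succ]; ring]
      rw [norm_mul, norm_neg, hnorm2c]
      exact hfinal a
    · have hpr : a = a' + hh := by
        rw [ha2, ha, hmc, hhh, hApow]
        push_cast
        field_simp
      rw [hpr]
      rw [show a' + hh + hh = a' + 2*hh by ring]
      rw [show (2:ℂ)^(j+1) * (G (a' + 2*hh) - G (a' + hh))
            - (2:ℂ)^j * (G (a' + 2*hh) - G a')
          = (2:ℂ)^j * ((G (a'+2*hh) - G (a'+hh)) - (G (a'+hh) - G a')) by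
        rw [pow_succ]; ring]
      rw [norm_mul, hnorm2c]
      exact hfinal a'
  -- lift to LinfN
  have hCmin0 : 0 ≤ 2^30*CC * min ((2:ℝ)^(j+1)/lam) (lam/(2:ℝ)^(j+1)) := by
    apply mul_nonneg (by positivity)
    exact le_min (by positivity) (by positivity)
  have hstep1 : LinfN (DkOp (j+1) (fun x => ∑ n ∈ S, co n * cE n x))
      = eLpNormEssSup (DkOp (j+1) (fun x => ∑ n ∈ S, co n * cE n x)) muT :=
    eLpNorm_exponent_top
  rw [hstep1]
  calc eLpNormEssSup (DkOp (j+1) (fun x => ∑ n ∈ S, co n * cE n x)) muT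
      ≤ ENNReal.ofReal (2^30*CC * min ((2:ℝ)^(j+1)/lam) (lam/(2:ℝ)^(j+1)) * M) :=
        eLpNormEssSup_le_of_ae_bound (Filter.Eventually.of_forall hpt)
    _ = ENNReal.ofReal (2^30*CC * min ((2:ℝ)^(j+1)/lam) (lam/(2:ℝ)^(j+1)))
        * ENNReal.ofReal M := ENNReal.ofReal_mul hCmin0
    _ = ENNReal.ofReal (2^30*CC * min ((2:ℝ)^(j+1)/lam) (lam/(2:ℝ)^(j+1))) * LinfN f := by
        rw [hM, ENNReal.ofReal_toReal hfin]
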